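/- Prior policy encodes previous training samples: assume σ has full support. Let S be partitioned into two disjoint nonempty subsets S_a and S_b with S_a ∪ S_b = S, and let π be a d-policy. Set φ_a := Σ_{s∈S_a} π(s) and φ_b := Σ_{s∈S_b} π(s). Then χ̂_{φ_b}[π restricted to S_a] + χ̂_0[π restricted to S_b] = χ(π) = χ̂_0[π restricted to S_a] + χ̂_{φ_a}[π restricted to S_b], where χ̂_φ[π restricted to T] denotes Σ_{n=1}^{|T|} log₂ σ(φ + Σ_{m=1}^{n-1} π(t_m), t_n)(π(t_n)) for any enumeration t₁,…,t_{|T|} of T (this value is independent of the enumeration by the chain rule). -/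
import Mathlib


open Finset

/-- A learning system: a commutative additive monoid `M` of stochastic policies,
a finite nonempty set `S` of contexts, a finite nonempty behavior set `A s` for each
context `s`, and an inference function `inf` assigning to each policy and context a
probability mass function on the behaviors of that context, satisfying the chain rule. -/
structure LearningSystem (M : Type) [AddCommMonoid M] (S : Type) [Fintype S] [DecidableEq S] :
    Type where
  A : S → Finset M
  A_nonempty : ∀ s, (A s).Nonempty
  inf : M → S → M → ℝ
  inf_nonneg : ∀ φ s a, 0 ≤ inf φ s a
  inf_eq_zero_of_not_mem : ∀ φ s a, a ∉ A s → inf φ s a = 0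
  inf_sum_one : ∀ φ s, ∑ a ∈ A s, inf φ s a = 1
  chain_rule : ∀ (φ : M) (s₁ s₂ : S) (a₁ a₂ : M), a₁ ∈ A s₁ → a₂ ∈ A s₂ →
    inf φ s₁ a₁ * inf (φ + a₁) s₂ a₂ = inf φ s₂ a₂ * inf (φ + a₂) s₁ a₁

namespace LearningSystem

variable {M S : Type} [AddCommMonoid M] [Fintype S] [DecidableEq S]

/-- A deterministic policy (d-policy): an assignment of a behavior `π s ∈ A s` to
every context `s ∈ S`. -/
abbrev DPolicy (L : LearningSystem M S) : Type := ∀ s : S, {a : M // a ∈ L.A s}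

/-- `σ` has full support: every behavior of every context has positive probability
under every prior policy. -/
def FullSupport (L : LearningSystem M S) : Prop :=
  ∀ (φ : M) (s : S) (a : M), a ∈ L.A s → 0 < L.inf φ s a

/-- The coherence of a d-policy `π` relative to the prior policy `φ`, computed along
the enumeration `f` of contexts:
`∑ n, log₂ σ(φ + ∑_{m<n} π(f m), f n)(π (f n))`. -/
noncomputable def cohAlong (L : LearningSystem M S) (φ : M) (π : L.DPolicy)
    {k : ℕ} (f : Fin k → S) : ℝ :=
  ∑ n : Fin k, Real.logb 2
    (L.inf (φ + ∑ m ∈ Finset.univ.filter (fun m => m < n), ((π (f m) : M)))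
      (f n) ((π (f n) : M)))

/-- The product `∏ n, σ(φ + ∑_{m<n} π(f m), f n)(π (f n))` along the enumeration `f`. -/
noncomputable def prodAlong (L : LearningSystem M S) (φ : M) (π : L.DPolicy)
    {k : ℕ} (f : Fin k → S) : ℝ :=
  ∏ n : Fin k,
    L.inf (φ + ∑ m ∈ Finset.univ.filter (fun m => m < n), ((π (f m) : M)))
      (f n) ((π (f n) : M))

end LearningSystem

namespace LearningSystem

variable {M S : Type} [AddCommMonoid M] [Fintype S] [DecidableEq S]

noncomputable def prodList (L : LearningSystem M S) (π : L.DPolicy) : M → List S → ℝ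
  | _, [] => 1
  | φ, s :: l => L.inf φ s ((π s : M)) * L.prodList π (φ + ((π s : M))) l

theorem prodList_pos (L : LearningSystem M S) (hfs : L.FullSupport) (π : L.DPolicy) :
    ∀ (l : List S) (φ : M), 0 < L.prodList π φ l
  | [], φ => one_pos
  | s :: l, φ => mul_pos (hfs φ s _ (π s).2) (prodList_pos L hfs π l _)

theorem prodList_perm (L : LearningSystem M S) (π : L.DPolicy) {l₁ l₂ : List S}
    (h : l₁.Perm l₂) : ∀ φ, L.prodList π φ l₁ = L.prodList π φ l₂ := by
  induction h with
  | nil => intro φ; rfl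
  | cons x h ih => intro φ; simp only [prodList, ih]
  | swap x y l => intro φ
                  simp only [prodList]
                  rw [← mul_assoc, ← mul_assoc, L.chain_rule φ y x _ _ (π y).2 (π x).2,
                    add_right_comm]
  | trans h₁ h₂ ih₁ ih₂ => intro φ; rw [ih₁ φ, ih₂ φ]

theorem prodList_append (L : LearningSystem M S) (π : L.DPolicy) :
    ∀ (l₁ l₂ : List S) (φ : M), L.prodList π φ (l₁ ++ l₂) =
      L.prodList π φ l₁ * L.prodList π (φ + (l₁.map (fun s => ((π s : M)))).sum) l₂
  | [], l₂, φ => by simp [prodList]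
  | s :: l₁, l₂, φ => by
      simp only [List.cons_append, List.append_eq, prodList, List.map_cons, List.sum_cons, mul_assoc]
      rw [prodList_append L π l₁ l₂, add_assoc]

theorem prodAlong_eq_prodList (L : LearningSystem M S) (π : L.DPolicy) :
    ∀ {k : ℕ} (f : Fin k → S) (φ : M),
      L.prodAlong φ π f = L.prodList π φ (List.ofFn f) := by
  intro k
  induction k with
  | zero => intro f φ; simp [prodAlong, prodList]
  | succ k ih =>
      intro f φ
      rw [List.ofFn_succ]
      simp only [prodList, ← ih]
      unfold prodAlong
      rw [Fin.prod_univ_succ]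
      congr 1
      · congr 1
        have : Finset.univ.filter (fun m : Fin (k+1) => m < 0) = ∅ := by
          apply Finset.filter_false_of_mem; intro m _; exact fun h => absurd h (Fin.not_lt_zero m)
        rw [this, Finset.sum_empty, add_zero]
      · apply Finset.prod_congr rfl
        intro n _
        have hsum : ∑ m ∈ Finset.univ.filter (fun m => m < n.succ), ((π (f m) : M)) =
            ((π (f 0) : M)) +
              ∑ m ∈ Finset.univ.filter (fun m => m < n), ((π ((f ∘ Fin.succ) m) : M)) := by
          rw [Finset.sum_filter, Finset.sum_filter, Fin.sum_univ_succ, if_pos n.succ_pos]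
          congr 1
          refine Finset.sum_congr rfl fun m _ => ?_
          simp [Fin.succ_lt_succ_iff, Function.comp]
        rw [hsum, ← add_assoc]
        rfl

theorem cohAlong_eq_logb (L : LearningSystem M S) (hfs : L.FullSupport) (π : L.DPolicy)
    {k : ℕ} (f : Fin k → S) (φ : M) :
    L.cohAlong φ π f = Real.logb 2 (L.prodAlong φ π f) := by
  unfold cohAlong prodAlong
  rw [Real.logb, Real.log_prod]
  · rw [Finset.sum_div]; rfl
  · intro n _; exact (hfs _ _ _ (π (f n)).2).ne'

end LearningSystem

section Main

variable {M S : Type} [AddCommMonoid M] [Fintype S] [DecidableEq S]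

theorem main_aux (L : LearningSystem M S) (hfs : L.FullSupport)
    {k : ℕ} (e : Fin k ≃ S)
    (Sa Sb : Finset S)
    (hdisj : Disjoint Sa Sb) (hunion : Sa ∪ Sb = Finset.univ)
    (π : L.DPolicy)
    (fa : Fin Sa.card → S) (hfa : Function.Injective fa) (hfa' : ∀ i, fa i ∈ Sa)
    (fb : Fin Sb.card → S) (hfb : Function.Injective fb) (hfb' : ∀ i, fb i ∈ Sb) :
    L.cohAlong 0 π ⇑e =
      L.cohAlong 0 π fa + L.cohAlong (∑ s ∈ Sa, ((π s : M))) π fb := by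
  set la := List.ofFn fa with hla
  set lb := List.ofFn fb with hlb
  set le := List.ofFn ⇑e with hle
  have hnda : la.Nodup := List.nodup_ofFn.mpr hfa
  have hndb : lb.Nodup := List.nodup_ofFn.mpr hfb
  have hnde : le.Nodup := List.nodup_ofFn.mpr e.injective
  have hta : la.toFinset = Sa := by
    apply Finset.eq_of_subset_of_card_le
    · intro s hs
      rw [List.mem_toFinset, hla, List.mem_ofFn] at hs
      obtain ⟨i, rfl⟩ := hs; exact hfa' i
    · rw [List.card_toFinset, hnda.dedup]
      simp [hla]
  have htb : lb.toFinset = Sb := by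
    apply Finset.eq_of_subset_of_card_le
    · intro s hs
      rw [List.mem_toFinset, hlb, List.mem_ofFn] at hs
      obtain ⟨i, rfl⟩ := hs; exact hfb' i
    · rw [List.card_toFinset, hndb.dedup]
      simp [hlb]
  have hndab : (la ++ lb).Nodup := by
    refine List.Nodup.append hnda hndb ?_
    intro s hsa hsb
    exact Finset.disjoint_left.mp hdisj (hta ▸ List.mem_toFinset.mpr hsa)
      (htb ▸ List.mem_toFinset.mpr hsb)
  have hperm : le.Perm (la ++ lb) := by
    apply List.perm_of_nodup_nodup_toFinset_eq hnde hndab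
    rw [List.toFinset_append, hta, htb, hunion]
    apply Finset.eq_of_subset_of_card_le (Finset.subset_univ _)
    rw [List.card_toFinset, hnde.dedup]
    simp only [hle, List.length_ofFn]
    exact le_of_eq ((Fintype.card_congr e.symm).trans (Fintype.card_fin k))
  have hsuma : (la.map (fun s => ((π s : M)))).sum = ∑ s ∈ Sa, ((π s : M)) := by
    rw [← hta, List.sum_toFinset _ hnda]
  have key : L.prodList π 0 le =
      L.prodList π 0 la * L.prodList π (∑ s ∈ Sa, ((π s : M))) lb := by
    rw [L.prodList_perm π hperm 0, L.prodList_append, hsuma, zero_add]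
  rw [L.cohAlong_eq_logb hfs, L.cohAlong_eq_logb hfs, L.cohAlong_eq_logb hfs,
    L.prodAlong_eq_prodList, L.prodAlong_eq_prodList, L.prodAlong_eq_prodList,
    ← hla, ← hlb, ← hle, key,
    Real.logb_mul (L.prodList_pos hfs π _ _).ne' (L.prodList_pos hfs π _ _).ne']

end Main

/-- Prior policy encodes previous training samples: let `S` be partitioned into
disjoint nonempty `S_a`, `S_b` with `S_a ∪ S_b = S`, let `π` be a d-policy, and set
`φ_a = ∑_{s∈S_a} π(s)`, `φ_b = ∑_{s∈S_b} π(s)`. Then for any enumerations `fa` of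
`S_a`, `fb` of `S_b` and `e` of `S`,
`χ̂_{φ_b}[π|S_a] + χ̂_0[π|S_b] = χ(π) = χ̂_0[π|S_a] + χ̂_{φ_a}[π|S_b]`. -/
theorem prior_policy_encodes_samples {M S : Type} [AddCommMonoid M] [Fintype S]
    [DecidableEq S] [Nonempty S] (L : LearningSystem M S) (hfs : L.FullSupport)
    {k : ℕ} (e : Fin k ≃ S)
    (Sa Sb : Finset S) (haNe : Sa.Nonempty) (hbNe : Sb.Nonempty)
    (hdisj : Disjoint Sa Sb) (hunion : Sa ∪ Sb = Finset.univ)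
    (π : L.DPolicy)
    (fa : Fin Sa.card → S) (hfa : Function.Injective fa) (hfa' : ∀ i, fa i ∈ Sa)
    (fb : Fin Sb.card → S) (hfb : Function.Injective fb) (hfb' : ∀ i, fb i ∈ Sb) :
    L.cohAlong (∑ s ∈ Sb, ((π s : M))) π fa + L.cohAlong 0 π fb =
        L.cohAlong 0 π ⇑e ∧
      L.cohAlong 0 π ⇑e =
        L.cohAlong 0 π fa + L.cohAlong (∑ s ∈ Sa, ((π s : M))) π fb := by
  have h1 := main_aux L hfs e Sa Sb hdisj hunion π fa hfa hfa' fb hfb hfb'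
  have h2 := main_aux L hfs e Sb Sa hdisj.symm (by rw [Finset.union_comm]; exact hunion)
    π fb hfb hfb' fa hfa hfa'
  exact ⟨by rw [h2]; ring, h1⟩
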